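/- arXiv:1601.06633 — 4 statements merged into one kernel-verified Lean document; each statement's English description precedes it below -/
import Mathlib

section
/- The trace form on a Clifford algebra is a symmetric trace: for the linear functional tr: C(q) → k defined on a free quadratic form with orthogonal basis by tr(a·e^0) = a and tr(e^Δ) = 0 for Δ ≠ 0, one has tr(uv) = tr(vu) for all u, v ∈ C(q). -/
/-!
Write `e^Δ` for the ordered product of the `e i` with `Δ i = true`. Since distinct basis vectors
anticommute and each `e i` squares to a scalar, moving the factors of `e^Γ` past those of `e^Δ`
gives `e^Δ e^Γ = c • e^(Δ xor Γ)` for some scalar `c`. Hence `tr (e^Δ e^Γ) = 0` unless `Δ = Γ`,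
so the bilinear forms `tr (u v)` and `tr (v u)` agree on pairs of basis vectors, hence everywhere.
-/

open CliffordAlgebra

theorem LinearMap.map_mul_comm_of_basis {ι R A : Type*} [CommSemiring R] [Semiring A]
    [Algebra R A] (B : Module.Basis ι R A) (f : A →ₗ[R] R)
    (h : ∀ i j, f (B i * B j) = f (B j * B i)) (u v : A) : f (u * v) = f (v * u) :=
  LinearMap.congr_fun₂
    (show (LinearMap.mul R A).compr₂ f = (LinearMap.mul R A).flip.compr₂ f from
      B.ext fun i => B.ext fun j => h i j) u v

section MaskedProd

variable {ι R A : Type*} [CommRing R] [Ring A] [Algebra R A]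

def maskedProd (v : ι → A) (l : List ι) (Δ : ι → Bool) : A :=
  (l.map fun i => if Δ i then v i else 1).prod

variable {v : ι → A}

@[simp]
theorem maskedProd_nil (Δ : ι → Bool) : maskedProd v [] Δ = 1 := rfl

@[simp]
theorem maskedProd_cons (j : ι) (l : List ι) (Δ : ι → Bool) :
    maskedProd v (j :: l) Δ = (if Δ j then v j else 1) * maskedProd v l Δ := by
  simp [maskedProd]

theorem exists_ite_mul_ite_eq_smul {x : A} (hx : ∃ r : R, x * x = algebraMap R A r)
    (p p' : Bool) :
    ∃ d : R, (if p then x else 1) * (if p' then x else 1) = d • if xor p p' then x else 1 := by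
  obtain ⟨r, hr⟩ := hx
  cases p <;> cases p'
  · exact ⟨1, by simp⟩
  · exact ⟨1, by simp⟩
  · exact ⟨1, by simp⟩
  · exact ⟨r, by simp [hr, Algebra.algebraMap_eq_smul_one]⟩

theorem exists_maskedProd_mul_eq_smul_mul (hanti : Pairwise fun i j => v i * v j = -(v j * v i))
    {l : List ι} {i : ι} (hi : i ∉ l) (Δ : ι → Bool) :
    ∃ c : R, maskedProd v l Δ * v i = c • (v i * maskedProd v l Δ) := by
  induction l with
  | nil => exact ⟨1, by simp⟩
  | cons j t ih =>
    obtain ⟨hij, hit⟩ := not_or.mp (List.mem_cons.not.mp hi)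
    obtain ⟨c, hc⟩ := ih hit
    cases hΔ : Δ j
    · exact ⟨c, by simp [hΔ, hc]⟩
    · refine ⟨-c, ?_⟩
      simp only [maskedProd_cons, hΔ, if_true]
      rw [mul_assoc, hc, mul_smul_comm, ← mul_assoc, hanti (Ne.symm hij), neg_smul, neg_mul,
        smul_neg, mul_assoc]

theorem exists_maskedProd_mul_maskedProd_eq_smul
    (hanti : Pairwise fun i j => v i * v j = -(v j * v i))
    (hsq : ∀ i, ∃ r : R, v i * v i = algebraMap R A r) {l : List ι} (hl : l.Nodup)
    (Δ Γ : ι → Bool) :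
    ∃ c : R, maskedProd v l Δ * maskedProd v l Γ
      = c • maskedProd v l (fun i => xor (Δ i) (Γ i)) := by
  induction l with
  | nil => exact ⟨1, by simp⟩
  | cons j t ih =>
    obtain ⟨hjt, ht⟩ := List.nodup_cons.mp hl
    obtain ⟨c, hc⟩ := ih ht
    obtain ⟨c', hc'⟩ : ∃ c' : R, maskedProd v t Δ * (if Γ j then v j else 1)
        = c' • ((if Γ j then v j else 1) * maskedProd v t Δ) := by
      cases Γ j
      · exact ⟨1, by simp⟩
      · simpa using exists_maskedProd_mul_eq_smul_mul hanti hjt Δ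
    obtain ⟨d, hd⟩ := exists_ite_mul_ite_eq_smul (hsq j) (Δ j) (Γ j)
    refine ⟨c' * d * c, ?_⟩
    set x := if Δ j then v j else 1
    set y := if Γ j then v j else 1
    simp only [maskedProd_cons]
    calc x * maskedProd v t Δ * (y * maskedProd v t Γ)
        = x * (maskedProd v t Δ * y) * maskedProd v t Γ := by simp only [mul_assoc]
      _ = c' • ((x * y) * (maskedProd v t Δ * maskedProd v t Γ)) := by
          rw [hc', mul_smul_comm, smul_mul_assoc]; simp only [mul_assoc]
      _ = (c' * d * c) • ((if xor (Δ j) (Γ j) then v j else 1) *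
            maskedProd v t fun i => xor (Δ i) (Γ i)) := by
          rw [hd, hc, smul_mul_smul_comm, smul_smul, mul_assoc]

end MaskedProd

/-- The trace form on a Clifford algebra is a symmetric trace: for the linear functional
`tr : C(q) → k`, defined on a free quadratic form with orthogonal basis by picking out the
coefficient of `e^0 = 1` with respect to the basis `{e^Δ}`, one has `tr (u * v) = tr (v * u)`
for all `u, v ∈ C(q)`. -/
theorem stmt_2 {R M : Type*} [CommRing R] [AddCommGroup M] [Module R M]
    (n : ℕ) (Q : QuadraticForm R M) (b : Module.Basis (Fin n) R M)
    (hortho : ∀ i j : Fin n, i ≠ j → Q.IsOrtho (b i) (b j))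
    (B : Module.Basis (Fin n → Bool) R (CliffordAlgebra Q))
    (hB : ∀ Δ : Fin n → Bool,
      B Δ = ((List.finRange n).map
        (fun i => if Δ i then CliffordAlgebra.ι Q (b i) else 1)).prod) :
    ∀ u v : CliffordAlgebra Q,
      B.repr (u * v) (fun _ => false) = B.repr (v * u) (fun _ => false) := by
  have hmul (Δ Γ : Fin n → Bool) : ∃ c : R, B Δ * B Γ = c • B fun i => xor (Δ i) (Γ i) := by
    simp only [hB]
    exact exists_maskedProd_mul_maskedProd_eq_smul
      (fun i j h => ι_mul_ι_comm_of_isOrtho (hortho i j h))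
      (fun i => ⟨Q (b i), ι_sq_scalar Q (b i)⟩) (List.nodup_finRange n) Δ Γ
  have htrace_of_ne {Δ Γ : Fin n → Bool} (hne : Δ ≠ Γ) :
      B.repr (B Δ * B Γ) (fun _ => false) = 0 := by
    obtain ⟨c, hc⟩ := hmul Δ Γ
    have hxor : (fun i => xor (Δ i) (Γ i)) ≠ fun _ => false := by simpa [funext_iff] using hne
    simp [hc, hxor]
  intro u v
  simpa only [B.coord_apply] using (B.coord _).map_mul_comm_of_basis B (fun Δ Γ => by
    by_cases h : Δ = Γ
    · rw [h]
    · simp only [B.coord_apply, htrace_of_ne h, htrace_of_ne (Ne.symm h)]) u v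
end

section
/- The bilinear form B(x,y) = tr(σ(x)·y) on the Clifford algebra C(q), where σ is the canonical involution and tr the trace form, is symmetric and non-degenerate, provided 1/2 ∈ k and (P,q) is non-degenerate. -/
/-!
Write `e_Δ = ∏_{i ∈ Δ} b_i` for the standard basis built from the orthogonal basis `b`, and
`tr` for the coefficient of `e_∅ = 1`. Then `σ(e_Δ) e_Δ = ∏_{i ∈ Δ} q(b_i)`, a unit because `q`
is non-degenerate. For `Δ ≠ Γ` pick `i` in exactly one of them: the automorphism of `C(q)`
induced by the reflection `b_i ↦ -b_i` fixes `tr` but negates `σ(e_Δ) e_Γ`, so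
`2 tr(σ(e_Δ) e_Γ) = 0`. Hence the form is diagonal in the basis `e_Δ` with unit diagonal
entries, which gives non-degeneracy; the case `Γ = ∅` gives `tr ∘ σ = tr`, hence symmetry.
-/

open CliffordAlgebra Module

section ListProd
variable {R A ι : Type*} [CommSemiring R] [Semiring A] [Algebra R A]

lemma list_prod_map_smul (l : List ι) (c : ι → R) (a : ι → A) :
    (l.map fun j => c j • a j).prod = (l.map c).prod • (l.map a).prod := by
  induction l with
  | nil => simp
  | cons j t ih =>
    rw [List.map_cons, List.prod_cons, ih, smul_mul_smul_comm]
    simp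

lemma list_prod_reverse_mul_prod (a : ι → A) (r : ι → R)
    (h : ∀ j, a j * a j = algebraMap R A (r j)) (l : List ι) :
    (l.reverse.map a).prod * (l.map a).prod = algebraMap R A (l.map r).prod := by
  induction l with
  | nil => simp
  | cons j t ih =>
    calc ((j :: t).reverse.map a).prod * ((j :: t).map a).prod
        = (t.reverse.map a).prod * (a j * a j) * (t.map a).prod := by
          simp only [List.reverse_cons, List.map_append, List.prod_append, List.map_cons,
            List.map_nil, List.prod_cons, List.prod_nil, mul_one, mul_assoc]
      _ = algebraMap R A (r j) * ((t.reverse.map a).prod * (t.map a).prod) := by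
          rw [h, ← Algebra.commutes, mul_assoc]
      _ = algebraMap R A ((j :: t).map r).prod := by
          rw [ih, ← map_mul, List.map_cons, List.prod_cons]

end ListProd

namespace QuadraticMap
variable {R M : Type*} [CommRing R] [AddCommGroup M] [Module R M] {Q : QuadraticForm R M}

lemma map_reflection {f : Dual R M} {x : M} (hfx : f x = 2)
    (hpolar : ∀ y, polar Q y x = f y * Q x) (y : M) :
    Q (Module.reflection hfx y) = Q y := by
  have hQ : ∀ z, Q (y - z) = Q y + Q z - polar Q y z := fun z => by
    rw [← neg_neg (polar Q y z), ← polar_neg_right, polar, QuadraticMap.map_neg, sub_eq_add_neg]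
    ring
  rw [Module.reflection_apply, hQ, QuadraticMap.map_smul, polar_smul_right, hpolar, smul_eq_mul,
    smul_eq_mul]
  ring

/-- `hpolar` says that `f = polar Q · x / Q x`, the usual reflection functional. -/
def reflectionIsometry {f : Dual R M} {x : M} (hfx : f x = 2)
    (hpolar : ∀ y, polar Q y x = f y * Q x) : Q →qᵢ Q where
  toLinearMap := Module.reflection hfx
  map_app' := map_reflection hfx hpolar

lemma reflectionIsometry_apply {f : Dual R M} {x : M} (hfx : f x = 2)
    (hpolar : ∀ y, polar Q y x = f y * Q x) (y : M) :
    reflectionIsometry hfx hpolar y = y - f y • x :=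
  Module.reflection_apply y hfx

end QuadraticMap

namespace Module.Basis
variable {R M ι : Type*} [CommRing R] [AddCommGroup M] [Module R M] {Q : QuadraticForm R M}
  (b : Basis ι R M) (hortho : ∀ i j, i ≠ j → Q.IsOrtho (b i) (b j))
include hortho

lemma polar_apply_right_of_isOrtho (m : M) (i : ι) :
    QuadraticMap.polar Q m (b i) = 2 * b.repr m i * Q (b i) := by
  have h : (QuadraticMap.polarBilin Q).flip (b i) = (2 * Q (b i)) • b.coord i := by
    refine b.ext fun j => ?_
    rcases eq_or_ne j i with rfl | hji
    · simp [QuadraticMap.polar_self, mul_comm]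
    · simp [(hortho j i hji).polar_eq_zero, hji]
  simpa [mul_comm, mul_left_comm, mul_assoc] using LinearMap.congr_fun h m

lemma isUnit_apply_of_isOrtho (hnd : Function.Surjective (QuadraticMap.polarBilin Q)) (i : ι) :
    IsUnit (Q (b i)) := by
  obtain ⟨m, hm⟩ := hnd (b.coord i)
  have h : QuadraticMap.polar Q m (b i) = 1 := by simpa using LinearMap.congr_fun hm (b i)
  rw [b.polar_apply_right_of_isOrtho hortho] at h
  exact IsUnit.of_mul_eq_one_right _ h

noncomputable def orthoReflection (i : ι) : Q →qᵢ Q :=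
  QuadraticMap.reflectionIsometry (f := (2 : R) • b.coord i) (x := b i) (by simp)
    (fun y => by
      rw [b.polar_apply_right_of_isOrtho hortho]
      simp [mul_assoc])

lemma orthoReflection_apply [DecidableEq ι] (i j : ι) :
    b.orthoReflection hortho i (b j) = if j = i then -b i else b j := by
  rw [orthoReflection, QuadraticMap.reflectionIsometry_apply]
  rcases eq_or_ne j i with rfl | hji
  · rw [if_pos rfl, LinearMap.smul_apply, coord_apply, repr_self, Finsupp.single_eq_same]
    module
  · simp [hji]

end Module.Basis

namespace CliffordAlgebra
variable {R M : Type*} [CommRing R] [AddCommGroup M] [Module R M] {Q : QuadraticForm R M}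

lemma reverse_list_prod (l : List (CliffordAlgebra Q)) :
    reverse l.prod = (l.map reverse).reverse.prod := by
  rw [← unop_reverseOp, map_list_prod, MulOpposite.unop_list_prod, List.map_map]
  rfl

lemma reverse_map {N : Type*} [AddCommGroup N] [Module R N] {Q' : QuadraticForm R N}
    (f : Q →qᵢ Q') (x : CliffordAlgebra Q) : reverse (map f x) = map f (reverse x) := by
  induction x using CliffordAlgebra.induction with
  | algebraMap r => simp [reverse.commutes]
  | ι m => simp [reverse_ι]
  | mul x y hx hy => simp [reverse.map_mul, hx, hy]
  | add x y hx hy => simp [hx, hy]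

section
variable {n : ℕ} {b : Basis (Fin n) R M} {B : Basis (Fin n → Bool) R (CliffordAlgebra Q)}
  (hB : ∀ Δ : Fin n → Bool,
  B Δ = ((List.finRange n).map (fun i => if Δ i then ι Q (b i) else 1)).prod)
include hB

lemma basis_false_eq_one : B (fun _ => false) = 1 := by
  simp [hB]

lemma reverse_basis_mul_basis_self (Δ : Fin n → Bool) :
    reverse (B Δ) * B Δ = algebraMap R _ (∏ i, if Δ i then Q (b i) else 1) := by
  have hsq : ∀ i, (if Δ i then ι Q (b i) else 1) * (if Δ i then ι Q (b i) else 1) =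
      algebraMap R (CliffordAlgebra Q) (if Δ i then Q (b i) else 1) := fun i => by
    split <;> simp [ι_sq_scalar]
  have hrev : ∀ i, reverse (if Δ i then ι Q (b i) else 1) = (if Δ i then ι Q (b i) else 1) :=
    fun i => by split <;> simp [reverse_ι]
  rw [hB, reverse_list_prod, List.map_map, Function.comp_def]
  simp only [hrev]
  rw [← List.map_reverse, list_prod_reverse_mul_prod _ _ hsq, Fin.prod_univ_def]

variable (hortho : ∀ i j, i ≠ j → Q.IsOrtho (b i) (b j))
include hortho

lemma map_orthoReflection_basis (i : Fin n) (Δ : Fin n → Bool) :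
    map (b.orthoReflection hortho i) (B Δ) = (if Δ i then -1 else 1 : R) • B Δ := by
  have hfactor : ∀ j, map (b.orthoReflection hortho i) (if Δ j then ι Q (b j) else 1) =
      (if Δ j ∧ j = i then -1 else 1 : R) • (if Δ j then ι Q (b j) else 1) := fun j => by
    rcases eq_or_ne j i with rfl | hji <;> cases Δ j
    · simp
    · simp [b.orthoReflection_apply hortho]
    · simp
    · simp [b.orthoReflection_apply hortho, hji]
  rw [hB, map_list_prod, List.map_map, Function.comp_def]
  simp only [hfactor]
  rw [list_prod_map_smul, ← Fin.prod_univ_def, Finset.prod_eq_single i (by simp_all) (by simp)]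
  simp

lemma coord_map_orthoReflection (i : Fin n) (x : CliffordAlgebra Q) :
    B.coord (fun _ => false) (map (b.orthoReflection hortho i) x) = B.coord (fun _ => false) x := by
  have h : B.coord (fun _ => false) ∘ₗ (map (b.orthoReflection hortho i)).toLinearMap =
      B.coord (fun _ => false) := by
    refine B.ext fun Δ => ?_
    rw [LinearMap.comp_apply, AlgHom.toLinearMap_apply, map_orthoReflection_basis hB hortho,
      map_smul, smul_eq_mul]
    rcases eq_or_ne Δ (fun _ => false) with rfl | hΔ
    · simp
    · simp [Ne.symm hΔ]
  exact LinearMap.congr_fun h x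

lemma coord_reverse_basis_mul_basis_of_ne [Invertible (2 : R)] {Δ Γ : Fin n → Bool}
    (hΔΓ : Δ ≠ Γ) : B.coord (fun _ => false) (reverse (B Δ) * B Γ) = 0 := by
  obtain ⟨i, hi⟩ := Function.ne_iff.mp hΔΓ
  have hneg : map (b.orthoReflection hortho i) (reverse (B Δ) * B Γ) =
      -(reverse (B Δ) * B Γ) := by
    rw [map_mul, ← reverse_map, map_orthoReflection_basis hB hortho,
      map_orthoReflection_basis hB hortho, map_smul, smul_mul_smul_comm]
    cases hΔ : Δ i <;> cases hΓ : Γ i <;> simp [hΔ, hΓ] at hi ⊢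
  have htwo : 2 * B.coord (fun _ => false) (reverse (B Δ) * B Γ) = 0 := by
    have := coord_map_orthoReflection hB hortho i (reverse (B Δ) * B Γ)
    rw [hneg, map_neg] at this
    linear_combination -this
  exact (isUnit_of_invertible (2 : R)).mul_right_eq_zero.mp htwo

lemma coord_reverse_basis_mul_basis [Invertible (2 : R)] (Δ Γ : Fin n → Bool) :
    B.coord (fun _ => false) (reverse (B Δ) * B Γ) =
      if Δ = Γ then ∏ i, if Δ i then Q (b i) else 1 else 0 := by
  split_ifs with hΔΓ
  · rw [hΔΓ, reverse_basis_mul_basis_self hB, Algebra.algebraMap_eq_smul_one,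
      ← basis_false_eq_one hB, map_smul]
    simp
  · exact coord_reverse_basis_mul_basis_of_ne hB hortho hΔΓ

lemma coord_reverse [Invertible (2 : R)] (x : CliffordAlgebra Q) :
    B.coord (fun _ => false) (reverse x) = B.coord (fun _ => false) x := by
  have h : B.coord (fun _ => false) ∘ₗ reverse = B.coord (fun _ => false) := by
    refine B.ext fun Δ => ?_
    rw [LinearMap.comp_apply, ← mul_one (reverse (B Δ)), ← basis_false_eq_one hB,
      coord_reverse_basis_mul_basis hB hortho]
    rcases eq_or_ne Δ (fun _ => false) with rfl | hΔ
    · simp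
    · simp [hΔ, Ne.symm hΔ]
  exact LinearMap.congr_fun h x

lemma coord_reverse_mul_basis [Invertible (2 : R)] (x : CliffordAlgebra Q) (Γ : Fin n → Bool) :
    B.coord (fun _ => false) (reverse x * B Γ) =
      B.repr x Γ * ∏ i, if Γ i then Q (b i) else 1 := by
  have h : B.coord (fun _ => false) ∘ₗ LinearMap.mulRight R (B Γ) ∘ₗ reverse =
      (∏ i, if Γ i then Q (b i) else 1) • B.coord Γ := by
    refine B.ext fun Δ => ?_
    rw [LinearMap.comp_apply, LinearMap.comp_apply, LinearMap.mulRight_apply,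
      coord_reverse_basis_mul_basis hB hortho]
    rcases eq_or_ne Δ Γ with rfl | hΔΓ
    · simp
    · simp [hΔΓ, Ne.symm hΔΓ]
  simpa [mul_comm] using LinearMap.congr_fun h x

end

end CliffordAlgebra

/-- The bilinear form `B(x,y) = tr (σ(x) * y)` on the Clifford algebra `C(q)`, where `σ` is
the canonical involution (`reverse`) and `tr` the trace form (coefficient of `1` with respect
to the standard basis), is symmetric and non-degenerate, provided `1/2 ∈ k` and `(P,q)` is
non-degenerate. -/
theorem stmt_3 {R M : Type*} [CommRing R] [Invertible (2 : R)]
    [AddCommGroup M] [Module R M]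
    (n : ℕ) (Q : QuadraticForm R M) (b : Module.Basis (Fin n) R M)
    (hortho : ∀ i j : Fin n, i ≠ j → Q.IsOrtho (b i) (b j))
    (hnd : Function.Bijective (QuadraticMap.polarBilin Q))
    (B : Module.Basis (Fin n → Bool) R (CliffordAlgebra Q))
    (hB : ∀ Δ : Fin n → Bool,
      B Δ = ((List.finRange n).map
        (fun i => if Δ i then CliffordAlgebra.ι Q (b i) else 1)).prod)
    (tr : CliffordAlgebra Q → R)
    (htr : ∀ x : CliffordAlgebra Q, tr x = B.repr x (fun _ => false)) :
    (∀ x y : CliffordAlgebra Q,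
        tr (CliffordAlgebra.reverse x * y) = tr (CliffordAlgebra.reverse y * x)) ∧
    (∀ x : CliffordAlgebra Q,
        (∀ y : CliffordAlgebra Q, tr (CliffordAlgebra.reverse x * y) = 0) → x = 0) := by
  obtain rfl : tr = B.coord (fun _ => false) := funext htr
  refine ⟨fun x y => ?_, fun x hx => B.ext_elem_iff.mpr fun Γ => ?_⟩
  · rw [← coord_reverse hB hortho, reverse.map_mul, reverse_reverse]
  · have hunit : IsUnit (∏ i, if Γ i then Q (b i) else 1) :=
      IsUnit.prod_univ_iff.mpr fun i => by
        split
        · exact b.isUnit_apply_of_isOrtho hortho hnd.surjective i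
        · exact isUnit_one
    have hxΓ := hx (B Γ)
    rw [coord_reverse_mul_basis hB hortho] at hxΓ
    simpa using hunit.mul_left_eq_zero.mp hxΓ
end

section
/- The map ϑ: C(q) → Hom_k(C(q)^op, k) defined by ϑ(x)(y^op) = B(x,y) = tr(σ(x)y) is an isomorphism of right C(q)-modules (where Hom_k(C(q)^op, k) carries the right C(q)-module structure induced by the involution), and satisfies ϑ^∨ ∘ can = ϑ, where can: C(q) → C(q)^{**} is the double-dual identification. Moreover ϑ preserves the ℤ/2-grading. -/
/-!
Nondegeneracy of the polar form makes every `Q (b i)` a unit. For an orthogonal basis with unit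
squares, the monomials `e_Δ` satisfy `e_Δ e_Γ = u • e_{Δ ⊕ Γ}` and `reverse e_Δ = u • e_Δ` with
units `u`. Hence, for the trace `tr` = coefficient of `e_∅ = 1`, the monomials are pairwise
orthogonal for both `tr (x * y)` and `tr (reverse x * y)`, with unit diagonal entries: so both
forms are symmetric, and `ϑ` sends the monomial basis to a rescaled dual basis. The module
compatibility is `tr (xy) = tr (yx)`, and the grading holds because `tr` is invariant under the
grade involution, which is `-1` on odd elements, while `2` is invertible.
-/

section DiagonalBilinear

variable {R M ι : Type*} [CommRing R] [AddCommGroup M] [Module R M]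

theorem LinearMap.flip_eq_self_of_basis_orthogonal (B : Module.Basis ι R M)
    {φ : M →ₗ[R] M →ₗ[R] R} (h : ∀ i j, i ≠ j → φ (B i) (B j) = 0) : φ.flip = φ :=
  LinearMap.ext_basis B B fun i j => by
    rcases eq_or_ne i j with rfl | hij
    · rfl
    · rw [LinearMap.flip_apply, h j i hij.symm, h i j hij]

theorem LinearMap.bijective_of_basis_orthogonal [Finite ι] (B : Module.Basis ι R M)
    {φ : M →ₗ[R] M →ₗ[R] R} (h : ∀ i j, i ≠ j → φ (B i) (B j) = 0)
    (hu : ∀ i, IsUnit (φ (B i) (B i))) : Function.Bijective φ := by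
  classical
  let B' := B.dualBasis.unitsSMul fun i => (hu i).unit
  have hφ : φ = (B.equiv B' (Equiv.refl ι)).toLinearMap := by
    refine LinearMap.ext_basis B B fun i j => ?_
    rw [LinearEquiv.coe_coe, Module.Basis.equiv_apply, Equiv.refl_apply,
      Module.Basis.unitsSMul_apply, Units.smul_def, LinearMap.smul_apply,
      Module.Basis.dualBasis_apply_self, IsUnit.unit_spec]
    rcases eq_or_ne i j with rfl | hij
    · simp
    · simp [h i j hij, hij.symm]
  rw [hφ]
  exact LinearEquiv.bijective _

end DiagonalBilinear

theorem List.count_filter_finRange {n : ℕ} (p : Fin n → Bool) (i : Fin n) :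
    ((List.finRange n).filter p).count i = if p i then 1 else 0 := by
  by_cases h : p i
  · rw [if_pos h, List.count_filter (by simpa using h),
      List.count_eq_one_of_mem (List.nodup_finRange n) (List.mem_finRange i)]
  · rw [if_neg h, List.count_eq_zero]
    exact fun hi => h (by simpa using List.of_mem_filter hi)

theorem QuadraticMap.isUnit_apply_basis_of_isOrtho {R M ι : Type*} [CommRing R]
    [AddCommGroup M] [Module R M] [Fintype ι] {Q : QuadraticForm R M} (b : Module.Basis ι R M)
    (hortho : ∀ i j, i ≠ j → Q.IsOrtho (b i) (b j))
    (hnd : Function.Surjective (QuadraticMap.polarBilin Q)) (j : ι) : IsUnit (Q (b j)) := by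
  obtain ⟨x, hx⟩ := hnd (b.coord j)
  have h1 : (1 : R) = b.repr x j * (2 * Q (b j)) := by
    calc (1 : R) = QuadraticMap.polarBilin Q x (b j) := by
          rw [hx, Module.Basis.coord_apply, Module.Basis.repr_self, Finsupp.single_eq_same]
      _ = ∑ i, b.repr x i * QuadraticMap.polar Q (b i) (b j) := by
          conv_lhs => rw [← b.sum_repr x]
          rw [map_sum, LinearMap.sum_apply]
          simp
      _ = b.repr x j * QuadraticMap.polar Q (b j) (b j) := by
          refine Finset.sum_eq_single_of_mem j (Finset.mem_univ j) fun i _ hij => ?_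
          rw [(hortho i j hij).polar_eq_zero, mul_zero]
      _ = b.repr x j * (2 * Q (b j)) := by
          rw [QuadraticMap.polar_self, nsmul_eq_mul, Nat.cast_ofNat]
  exact IsUnit.of_mul_eq_one (b.repr x j * 2) (by linear_combination -h1)

namespace CliffordAlgebra

variable {R M : Type*} [CommRing R] [AddCommGroup M] [Module R M] (Q : QuadraticForm R M)
  {n : ℕ} (b : Fin n → M)

/-- For `L = List.finRange n` this is the basis monomial `e_Δ`; other lists `L` are needed
for the inductions below. -/
def listMonomial (L : List (Fin n)) (Δ : Fin n → Bool) : CliffordAlgebra Q :=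
  (L.map fun i => if Δ i then ι Q (b i) else 1).prod

variable {Q b}

theorem listMonomial_cons (i : Fin n) (L : List (Fin n)) (Δ : Fin n → Bool) :
    listMonomial Q b (i :: L) Δ = (if Δ i then ι Q (b i) else 1) * listMonomial Q b L Δ := by
  simp [listMonomial]

theorem listMonomial_congr {L : List (Fin n)} {Δ Δ' : Fin n → Bool}
    (h : ∀ i ∈ L, Δ i = Δ' i) : listMonomial Q b L Δ = listMonomial Q b L Δ' :=
  congrArg List.prod (List.map_congr_left fun i hi => by rw [h i hi])

theorem listMonomial_eq_prod_filter (L : List (Fin n)) (Δ : Fin n → Bool) :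
    listMonomial Q b L Δ = (((L.filter Δ).map b).map (ι Q)).prod := by
  induction L with
  | nil => rfl
  | cons i L ih => by_cases h : Δ i <;> simp [listMonomial_cons, ih, h]

theorem involute_listMonomial (L : List (Fin n)) (Δ : Fin n → Bool) :
    involute (listMonomial Q b L Δ) = (-1 : R) ^ (L.filter Δ).length • listMonomial Q b L Δ := by
  rw [listMonomial_eq_prod_filter, involute_prod_map_ι, List.length_map]

theorem ι_mul_listMonomial (hortho : ∀ i j, i ≠ j → Q.IsOrtho (b i) (b j))
    (hq : ∀ i, IsUnit (Q (b i))) {L : List (Fin n)} (hL : L.Nodup) {j : Fin n} (hj : j ∈ L)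
    (Δ : Fin n → Bool) : ∃ c : R, IsUnit c ∧
      ι Q (b j) * listMonomial Q b L Δ = c • listMonomial Q b L (Function.update Δ j (!Δ j)) := by
  induction L with
  | nil => simp at hj
  | cons i L ih =>
    rw [List.nodup_cons] at hL
    rcases List.mem_cons.mp hj with rfl | hjL
    · have hL : listMonomial Q b L (Function.update Δ j (!Δ j)) = listMonomial Q b L Δ :=
        listMonomial_congr fun k hk =>
          Function.update_of_ne (fun h : k = j => hL.1 (h ▸ hk)) _ _
      rw [listMonomial_cons, listMonomial_cons, hL, Function.update_self]
      cases Δ j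
      · exact ⟨1, isUnit_one, by simp⟩
      · refine ⟨Q (b j), hq j, ?_⟩
        rw [if_pos rfl, if_neg (by simp), one_mul, ← mul_assoc, ι_sq_scalar,
          ← Algebra.smul_def]
    · have hij : i ≠ j := fun h => hL.1 (h ▸ hjL)
      obtain ⟨c, hc, hmul⟩ := ih hL.2 hjL
      rw [listMonomial_cons, listMonomial_cons, Function.update_of_ne hij]
      cases Δ i
      · exact ⟨c, hc, by simpa using hmul⟩
      · refine ⟨-c, hc.neg, ?_⟩
        rw [if_pos rfl, ← mul_assoc, ι_mul_ι_comm_of_isOrtho (hortho j i hij.symm), neg_mul,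
          mul_assoc, hmul, mul_smul_comm, neg_smul]

theorem prod_map_ι_eq_smul_listMonomial (hortho : ∀ i j, i ≠ j → Q.IsOrtho (b i) (b j))
    (hq : ∀ i, IsUnit (Q (b i))) (L : List (Fin n)) : ∃ c : R, IsUnit c ∧
      ((L.map b).map (ι Q)).prod
        = c • listMonomial Q b (List.finRange n) (fun i => (L.count i).bodd) := by
  induction L with
  | nil =>
    refine ⟨1, isUnit_one, ?_⟩
    simp [listMonomial_eq_prod_filter]
  | cons j L ih =>
    obtain ⟨c, hc, hprod⟩ := ih
    obtain ⟨c', hc', hj⟩ := ι_mul_listMonomial hortho hq (List.nodup_finRange n)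
      (List.mem_finRange j) (fun i => (L.count i).bodd)
    refine ⟨c * c', hc.mul hc', ?_⟩
    have hparity : Function.update (fun i => (L.count i).bodd) j (!(L.count j).bodd)
        = fun i => ((j :: L).count i).bodd := by
      funext i
      by_cases h : i = j
      · subst h; rw [Function.update_self, List.count_cons_self, Nat.bodd_succ]
      · rw [Function.update_of_ne h, List.count_cons_of_ne (Ne.symm h)]
    rw [List.map_cons, List.map_cons, List.prod_cons, hprod, mul_smul_comm, hj, hparity,
      smul_smul]

theorem listMonomial_mul_listMonomial (hortho : ∀ i j, i ≠ j → Q.IsOrtho (b i) (b j))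
    (hq : ∀ i, IsUnit (Q (b i))) (Δ Γ : Fin n → Bool) : ∃ c : R, IsUnit c ∧
      listMonomial Q b (List.finRange n) Δ * listMonomial Q b (List.finRange n) Γ
        = c • listMonomial Q b (List.finRange n) (fun i => xor (Δ i) (Γ i)) := by
  obtain ⟨c, hc, h⟩ := prod_map_ι_eq_smul_listMonomial hortho hq
    ((List.finRange n).filter Δ ++ (List.finRange n).filter Γ)
  have hparity :
      (fun i => (((List.finRange n).filter Δ ++ (List.finRange n).filter Γ).count i).bodd)
        = fun i => xor (Δ i) (Γ i) := by
    funext i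
    rw [List.count_append, List.count_filter_finRange, List.count_filter_finRange]
    cases Δ i <;> cases Γ i <;> rfl
  refine ⟨c, hc, ?_⟩
  rw [listMonomial_eq_prod_filter, listMonomial_eq_prod_filter, ← List.prod_append,
    ← List.map_append, ← List.map_append, h, hparity]

theorem reverse_listMonomial (hortho : ∀ i j, i ≠ j → Q.IsOrtho (b i) (b j))
    (hq : ∀ i, IsUnit (Q (b i))) (Δ : Fin n → Bool) : ∃ c : R, IsUnit c ∧
      reverse (listMonomial Q b (List.finRange n) Δ)
        = c • listMonomial Q b (List.finRange n) Δ := by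
  obtain ⟨c, hc, h⟩ := prod_map_ι_eq_smul_listMonomial hortho hq
    ((List.finRange n).filter Δ).reverse
  have hparity : (fun i => (((List.finRange n).filter Δ).reverse.count i).bodd) = Δ := by
    funext i
    rw [List.count_reverse, List.count_filter_finRange]
    cases Δ i <;> rfl
  refine ⟨c, hc, ?_⟩
  nth_rw 1 [listMonomial_eq_prod_filter]
  rw [reverse_prod_map_ι, ← List.map_reverse, ← List.map_reverse, h, hparity]

section TraceForm

variable (B : Module.Basis (Fin n → Bool) R (CliffordAlgebra Q))

noncomputable def traceForm : CliffordAlgebra Q →ₗ[R] CliffordAlgebra Q →ₗ[R] R :=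
  ((LinearMap.mul R (CliffordAlgebra Q)).compr₂ (B.coord fun _ => false)).comp reverse

theorem traceForm_apply (x y : CliffordAlgebra Q) :
    traceForm B x y = B.coord (fun _ => false) (reverse x * y) :=
  rfl

variable {B}

theorem reverse_basis (hortho : ∀ i j, i ≠ j → Q.IsOrtho (b i) (b j))
    (hq : ∀ i, IsUnit (Q (b i))) (hB : ∀ Δ, B Δ = listMonomial Q b (List.finRange n) Δ)
    (Δ : Fin n → Bool) : ∃ c : R, IsUnit c ∧ reverse (B Δ) = c • B Δ := by
  simpa only [hB] using reverse_listMonomial hortho hq Δ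

theorem coord_basis_mul_basis (hortho : ∀ i j, i ≠ j → Q.IsOrtho (b i) (b j))
    (hq : ∀ i, IsUnit (Q (b i))) (hB : ∀ Δ, B Δ = listMonomial Q b (List.finRange n) Δ)
    (Δ Γ : Fin n → Bool) : ∃ c : R, IsUnit c ∧
      B.coord (fun _ => false) (B Δ * B Γ) = if Δ = Γ then c else 0 := by
  obtain ⟨c, hc, h⟩ := listMonomial_mul_listMonomial hortho hq Δ Γ
  refine ⟨c, hc, ?_⟩
  have hxor : ((fun i => xor (Δ i) (Γ i)) = fun _ => false) ↔ Δ = Γ := by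
    simp [funext_iff]
  rw [hB, hB, h, ← hB, map_smul, Module.Basis.coord_apply, Module.Basis.repr_self,
    Finsupp.single_apply, smul_eq_mul]
  simp only [hxor, mul_ite, mul_one, mul_zero]

theorem traceForm_basis_basis (hortho : ∀ i j, i ≠ j → Q.IsOrtho (b i) (b j))
    (hq : ∀ i, IsUnit (Q (b i))) (hB : ∀ Δ, B Δ = listMonomial Q b (List.finRange n) Δ)
    (Δ Γ : Fin n → Bool) : ∃ c : R, IsUnit c ∧
      traceForm B (B Δ) (B Γ) = if Δ = Γ then c else 0 := by
  obtain ⟨c, hc, hrev⟩ := reverse_basis hortho hq hB Δ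
  obtain ⟨c', hc', hmul⟩ := coord_basis_mul_basis hortho hq hB Δ Γ
  refine ⟨c * c', hc.mul hc', ?_⟩
  rw [traceForm_apply, hrev, smul_mul_assoc, map_smul, hmul, smul_eq_mul, mul_ite, mul_zero]

theorem traceForm_comm (hortho : ∀ i j, i ≠ j → Q.IsOrtho (b i) (b j))
    (hq : ∀ i, IsUnit (Q (b i))) (hB : ∀ Δ, B Δ = listMonomial Q b (List.finRange n) Δ)
    (x y : CliffordAlgebra Q) : traceForm B x y = traceForm B y x := by
  have hsymm : (traceForm B).flip = traceForm B :=
    LinearMap.flip_eq_self_of_basis_orthogonal B fun Δ Γ hne => by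
      obtain ⟨c, -, h⟩ := traceForm_basis_basis hortho hq hB Δ Γ
      rw [h, if_neg hne]
  exact LinearMap.congr_fun₂ hsymm y x

theorem bijective_traceForm (hortho : ∀ i j, i ≠ j → Q.IsOrtho (b i) (b j))
    (hq : ∀ i, IsUnit (Q (b i))) (hB : ∀ Δ, B Δ = listMonomial Q b (List.finRange n) Δ) :
    Function.Bijective (traceForm B) := by
  refine LinearMap.bijective_of_basis_orthogonal B (fun Δ Γ hne => ?_) fun Δ => ?_
  · obtain ⟨c, -, h⟩ := traceForm_basis_basis hortho hq hB Δ Γ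
    rw [h, if_neg hne]
  · obtain ⟨c, hc, h⟩ := traceForm_basis_basis hortho hq hB Δ Δ
    rwa [h, if_pos rfl]

theorem coord_mul_comm (hortho : ∀ i j, i ≠ j → Q.IsOrtho (b i) (b j))
    (hq : ∀ i, IsUnit (Q (b i))) (hB : ∀ Δ, B Δ = listMonomial Q b (List.finRange n) Δ)
    (x y : CliffordAlgebra Q) :
    B.coord (fun _ => false) (x * y) = B.coord (fun _ => false) (y * x) := by
  let φ := (LinearMap.mul R (CliffordAlgebra Q)).compr₂ (B.coord fun _ => false)
  have hsymm : φ.flip = φ :=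
    LinearMap.flip_eq_self_of_basis_orthogonal B fun Δ Γ hne => by
      obtain ⟨c, -, h⟩ := coord_basis_mul_basis hortho hq hB Δ Γ
      rw [LinearMap.compr₂_apply, LinearMap.mul_apply', h, if_neg hne]
  exact LinearMap.congr_fun₂ hsymm y x

theorem traceForm_mul_left (hortho : ∀ i j, i ≠ j → Q.IsOrtho (b i) (b j))
    (hq : ∀ i, IsUnit (Q (b i))) (hB : ∀ Δ, B Δ = listMonomial Q b (List.finRange n) Δ)
    (x a y : CliffordAlgebra Q) : traceForm B (x * a) y = traceForm B x (y * reverse a) := by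
  rw [traceForm_apply, traceForm_apply, reverse.map_mul, mul_assoc,
    coord_mul_comm hortho hq hB, mul_assoc]

theorem coord_involute (hB : ∀ Δ, B Δ = listMonomial Q b (List.finRange n) Δ)
    (x : CliffordAlgebra Q) :
    B.coord (fun _ => false) (involute x) = B.coord (fun _ => false) x := by
  refine LinearMap.congr_fun (B.ext fun Δ => ?_ :
    (B.coord fun _ => false) ∘ₗ involute.toLinearMap = B.coord fun _ => false) x
  rw [LinearMap.comp_apply, AlgHom.toLinearMap_apply, hB, involute_listMonomial, map_smul]
  rcases eq_or_ne Δ (fun _ => false) with rfl | hΔ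
  · simp
  · rw [← hB, Module.Basis.coord_apply, Module.Basis.repr_self, Finsupp.single_eq_of_ne hΔ.symm,
      smul_zero]

theorem coord_eq_zero_of_mem_odd [Invertible (2 : R)]
    (hB : ∀ Δ, B Δ = listMonomial Q b (List.finRange n) Δ) {x : CliffordAlgebra Q}
    (hx : x ∈ evenOdd Q 1) : B.coord (fun _ => false) x = 0 := by
  have h : B.coord (fun _ => false) x = -B.coord (fun _ => false) x := by
    rw [← map_neg, ← involute_eq_of_mem_odd hx, coord_involute hB]
  linear_combination (⅟2 : R) * h - B.coord (fun _ => false) x * invOf_mul_self (2 : R)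

theorem traceForm_eq_zero_of_mem_evenOdd [Invertible (2 : R)]
    (hB : ∀ Δ, B Δ = listMonomial Q b (List.finRange n) Δ) {i j : ZMod 2} (hij : i ≠ j)
    {x y : CliffordAlgebra Q} (hx : x ∈ evenOdd Q i) (hy : y ∈ evenOdd Q j) :
    traceForm B x y = 0 := by
  have hodd : i + j = 1 := (by decide : ∀ i j : ZMod 2, i ≠ j → i + j = 1) i j hij
  have hxy : reverse x * y ∈ evenOdd Q (i + j) :=
    SetLike.mul_mem_graded ((reverse_mem_evenOdd_iff Q).mpr hx) hy
  rw [hodd] at hxy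
  exact coord_eq_zero_of_mem_odd hB hxy

end TraceForm

end CliffordAlgebra

open CliffordAlgebra in
/-- The map `ϑ : C(q) → Hom_k(C(q)ᵒᵖ, k)`, `ϑ(x)(yᵒᵖ) = B(x,y) = tr (σ(x) y)`, is a
`k`-linear isomorphism onto the dual which is a right `C(q)`-module map for the module
structure induced by the canonical involution (`ϑ(x·a)(y) = ϑ(x)(y·σ(a))`), satisfies
`ϑ^∨ ∘ can = ϑ` (i.e. the associated bilinear form is symmetric), and preserves the
`ℤ/2`-grading (components of different parity pair to zero). -/
theorem stmt_4 {R M : Type*} [CommRing R] [Invertible (2 : R)]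
    [AddCommGroup M] [Module R M]
    (n : ℕ) (Q : QuadraticForm R M) (b : Module.Basis (Fin n) R M)
    (hortho : ∀ i j : Fin n, i ≠ j → Q.IsOrtho (b i) (b j))
    (hnd : Function.Bijective (QuadraticMap.polarBilin Q))
    (B : Module.Basis (Fin n → Bool) R (CliffordAlgebra Q))
    (hB : ∀ Δ : Fin n → Bool,
      B Δ = ((List.finRange n).map
        (fun i => if Δ i then CliffordAlgebra.ι Q (b i) else 1)).prod)
    (tr : CliffordAlgebra Q → R)
    (htr : ∀ x : CliffordAlgebra Q, tr x = B.repr x (fun _ => false)) :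
    ∃ ϑ : CliffordAlgebra Q ≃ₗ[R] Module.Dual R (CliffordAlgebra Q),
      (∀ x y : CliffordAlgebra Q, ϑ x y = tr (CliffordAlgebra.reverse x * y)) ∧
      (∀ x a y : CliffordAlgebra Q, ϑ (x * a) y = ϑ x (y * CliffordAlgebra.reverse a)) ∧
      (∀ x y : CliffordAlgebra Q, ϑ x y = ϑ y x) ∧
      (∀ (i j : ZMod 2) (x y : CliffordAlgebra Q),
        x ∈ CliffordAlgebra.evenOdd Q i → y ∈ CliffordAlgebra.evenOdd Q j → i ≠ j →
          ϑ x y = 0) := by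
  have hq := QuadraticMap.isUnit_apply_basis_of_isOrtho b hortho hnd.2
  obtain rfl : tr = B.coord fun _ => false := funext htr
  exact ⟨.ofBijective (traceForm B) (bijective_traceForm hortho hq hB), fun _ _ => rfl,
    traceForm_mul_left hortho hq hB, traceForm_comm hortho hq hB,
    fun _ _ _ _ hx hy hij => traceForm_eq_zero_of_mem_evenOdd hB hij hx hy⟩
end

section
/- For a quadratic form q = ⟨a₁,…,aₙ⟩ over a field k of characteristic ≠ 2 with orthogonal basis e₁,…,eₙ, the restriction of the trace form of the Clifford algebra to the even part C₀(q) is isometric (in the Witt group W(k)) to the Pfister form ⟨⟨a₁a₂,…,a₁aₙ⟩⟩ = ⟨1,a₁a₂⟩⊗···⊗⟨1,a₁aₙ⟩; that is, the diagonal form ⊥_{Δ∈Ω} ⟨q(e^Δ)⟩ over all even multi-indices Δ equals ⟨⟨a₁a₂,…,a₁aₙ⟩⟩ in W(k), where q(e^Δ) = a₁^{b₁}···aₙ^{bₙ}. -/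
/-!
Dropping the first coordinate identifies the even multi-indices `Δ` on `{0, …, n}` with all
multi-indices `S` on `{1, …, n}`, since the parity of `|Δ|` determines `Δ 0`. Under this
bijection the Pfister weight `∏_{j ∈ S} a₀aⱼ = a₀^|S| ∏_{j ∈ S} aⱼ` differs from the Clifford
weight `a₀^(|S| mod 2) ∏_{j ∈ S} aⱼ` by the square `(a₀^⌊|S|/2⌋)²`, and a diagonal form is
unchanged up to isometry when its weights are permuted or scaled by squares of units.
-/

open Finset QuadraticMap

namespace QuadraticMap

theorem equivalent_weightedSumSquares_comp_equiv {ι ι' R S : Type*} [Fintype ι] [Fintype ι']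
    [CommSemiring R] [Monoid S] [DistribMulAction S R] [SMulCommClass S R R]
    (e : ι ≃ ι') (w : ι' → S) :
    Equivalent (weightedSumSquares R (w ∘ e)) (weightedSumSquares R w) :=
  ⟨{ LinearEquiv.funCongrLeft R R e.symm with
      map_app' := fun x => by
        simp [weightedSumSquares_apply, ← e.sum_comp, LinearEquiv.funCongrLeft_apply] }⟩

end QuadraticMap

namespace Fin

variable {n : ℕ}

theorem card_filter_cons_eq (b : Bool) (S : Fin n → Bool) :
    #{i | (cons b S : Fin (n + 1) → Bool) i} = b.toNat + #{j | S j} := by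
  rw [card_filter_univ_succ']
  cases b <;> simp

theorem even_card_filter_cons_iff (b : Bool) (S : Fin n → Bool) :
    Even #{i | (cons b S : Fin (n + 1) → Bool) i} ↔ b = decide (Odd #{j | S j}) := by
  rw [card_filter_cons_eq]
  cases b <;> simp [Nat.even_add_one, parity_simps]

def evenBoolTupleEquiv (n : ℕ) :
    {Δ : Fin (n + 1) → Bool // Even #{i | Δ i}} ≃ (Fin n → Bool) where
  toFun Δ := tail Δ.1
  invFun S := ⟨cons (decide (Odd #{j | S j})) S, (even_card_filter_cons_iff _ S).2 rfl⟩
  left_inv := by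
    rintro ⟨Δ, hΔ⟩
    rw [← cons_self_tail Δ, even_card_filter_cons_iff] at hΔ
    ext1
    simp only [← hΔ, cons_self_tail]
  right_inv S := tail_cons _ _

theorem prod_ite_cons {M : Type*} [CommMonoid M] (a : Fin (n + 1) → M) (b : Bool)
    (S : Fin n → Bool) :
    ∏ i, (if (cons b S : Fin (n + 1) → Bool) i then a i else 1)
      = (if b then a 0 else 1) * ∏ j, if S j then a j.succ else 1 := by
  simp [prod_univ_succ]

end Fin

theorem Finset.prod_ite_mul_const_left {ι M : Type*} [Fintype ι] [CommMonoid M] (c : M)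
    (x : ι → M) (S : ι → Bool) :
    ∏ j, (if S j then c * x j else 1) = c ^ #{j | S j} * ∏ j, if S j then x j else 1 := by
  rw [← prod_filter, ← prod_filter, prod_mul_distrib, prod_const]

theorem pow_eq_ite_odd_mul_sq {M : Type*} [Monoid M] (c : M) (m : ℕ) :
    c ^ m = (if Odd m then c else 1) * (c ^ (m / 2)) ^ 2 := by
  conv_lhs => rw [← Nat.mod_add_div m 2, pow_add, pow_mul']
  split_ifs with h
  · rw [Nat.odd_iff.mp h, pow_one]
  · rw [Nat.not_odd_iff.mp h, pow_zero]

theorem stmt_5_general {k : Type*} [Field k] (n : ℕ)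
    (a : Fin (n + 1) → k) (ha : ∀ i, a i ≠ 0) :
    QuadraticMap.Equivalent
      (QuadraticMap.weightedSumSquares k
        (fun Δ : {Δ : Fin (n + 1) → Bool // Even (Finset.univ.filter fun i => Δ i).card} =>
          ∏ i : Fin (n + 1), if Δ.1 i then a i else 1))
      (QuadraticMap.weightedSumSquares k
        (fun S : Fin n → Bool =>
          ∏ j : Fin n, if S j then a 0 * a j.succ else 1)) := by
  let e := Fin.evenBoolTupleEquiv n
  let u : (Fin n → Bool) → kˣ := fun S => Units.mk0 (a 0) (ha 0) ^ (#{j | S j} / 2)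
  have hweight : ∀ S : Fin n → Bool,
      (∏ i, if (e.symm S).1 i then a i else 1) * (u S : k) ^ 2
        = ∏ j, if S j then a 0 * a j.succ else 1 := fun S => by
    simp only [e, u, Fin.evenBoolTupleEquiv, Equiv.coe_fn_symm_mk, Fin.prod_ite_cons,
      Finset.prod_ite_mul_const_left, Units.val_pow_eq_pow_val, Units.val_mk0,
      pow_eq_ite_odd_mul_sq (a 0) #{j | S j}, decide_eq_true_eq]
    ring
  exact (equivalent_weightedSumSquares_comp_equiv e.symm _).symm.trans
    ⟨(QuadraticForm.isometryEquivWeightedSumSquaresWeightedSumSquares u hweight).symm⟩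

/-- For a diagonal quadratic form `⟨a₁,…,aₙ⟩` (here with `n+1` entries `a 0, …, a n`) over a
field `k` of characteristic `≠ 2`, the restriction of the trace form of the Clifford algebra
to the even part, namely the diagonal form `⊥_{Δ ∈ Ω} ⟨q(e^Δ)⟩` over the even multi-indices
`Δ` with `q(e^Δ) = a₁^{b₁} ⋯ aₙ^{bₙ}`, is isometric to the Pfister form
`⟨⟨a₁a₂, …, a₁aₙ⟩⟩ = ⟨1, a₁a₂⟩ ⊗ ⋯ ⊗ ⟨1, a₁aₙ⟩` (indexed by subsets of `{2,…,n}`). -/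
theorem stmt_5 {k : Type*} [Field k] (h2 : (2 : k) ≠ 0) (n : ℕ)
    (a : Fin (n + 1) → k) (ha : ∀ i, a i ≠ 0) :
    QuadraticMap.Equivalent
      (QuadraticMap.weightedSumSquares k
        (fun Δ : {Δ : Fin (n + 1) → Bool // Even (Finset.univ.filter fun i => Δ i).card} =>
          ∏ i : Fin (n + 1), if Δ.1 i then a i else 1))
      (QuadraticMap.weightedSumSquares k
        (fun S : Fin n → Bool =>
          ∏ j : Fin n, if S j then a 0 * a j.succ else 1)) :=
  stmt_5_general n a ha
end
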